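/- Let T > 0, m > 0, d ≥ 1, α ∈ (0,1). Let f:ℝᵈ→ℝᵈ be twice continuously differentiable with all first and second order partial derivatives bounded and globally Lipschitz continuous, and suppose there exist β ∈ [0,1) and c₀ > 0 with |f(x)| ≤ |x|^β + c₀ for all x ∈ ℝᵈ. For continuously differentiable x:[0,T]→ℝᵈ define U(x) = m⟨f(x(T)), ẋ(T)⟩ − m⟨f(x(0)), ẋ(0)⟩ − ∫₀ᵀ ( m⟨Df(x(t))ẋ(t), ẋ(t)⟩ − ⟨f(x(t)), ẋ(t)⟩ + (1/2)|f(x(t))|² ) dt, where Df denotes the Jacobian of f. Then for every ε > 0 there exists M > 0 such that U(x) ≤ ε·‖x‖²_{C^{1+α}} + M for every continuously differentiable x:[0,T]→ℝᵈ with α-Hölder continuous derivative. -/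

import Mathlib

/-!
The boundary defect `m⟨f(x), ẋ⟩|₀ᵀ - m ∫ ⟨Df(x)ẋ, ẋ⟩` would be `m ∫ ⟨f(x), ẍ⟩`, but `ẍ` need not
exist. Instead, on each cell `[a, b]` of a uniform partition of mesh `δ` we freeze `ẋ` at `ẋ(b)`:
by the fundamental theorem of calculus for `f ∘ x`, the defect on the cell equals
`⟨f(x(a)), ẋ(b) - ẋ(a)⟩ + ∫ₐᵇ ⟨Df(x)ẋ, ẋ(b) - ẋ⟩ = O(δ^α [ẋ]_α (|f(x)| + δ ‖Df‖ |ẋ|))`.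
Summed over the cells, the `‖Df‖` part is at most `m ‖Df‖ T δ^α ‖x‖²`, made `≤ ε/2 ‖x‖²` by the
choice of `δ`, while every remaining term is `O((‖x‖^β + c₀) ‖x‖) = o(‖x‖²)` by the sublinear growth
of `f`.
-/

open scoped RealInnerProductSpace

/-- The `C^{1+α}` norm of a vector-valued function on `[0,T]`:
`sup ‖x‖ + sup ‖x'‖ + sup_{s ≠ t} ‖x'(t) - x'(s)‖ / |t-s|^α`. -/
noncomputable def C1alphaNorm {E : Type*} [NormedAddCommGroup E] [NormedSpace ℝ E]
    (T α : ℝ) (x : ℝ → E) : ℝ :=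
  (⨆ t : Set.Icc (0:ℝ) T, ‖x t‖) + (⨆ t : Set.Icc (0:ℝ) T, ‖deriv x t‖) +
    ⨆ p : Set.Icc (0:ℝ) T × Set.Icc (0:ℝ) T,
      if (p.1 : ℝ) = (p.2 : ℝ) then 0
      else ‖deriv x p.1 - deriv x p.2‖ / |(p.1 : ℝ) - (p.2 : ℝ)| ^ α

/-- The log-density `U` of the conditioned Langevin law with respect to the
Gaussian bridge:
`U(x) = m⟨f(x(T)), ẋ(T)⟩ − m⟨f(x(0)), ẋ(0)⟩
  − ∫₀ᵀ ( m⟨Df(x)ẋ, ẋ⟩ − ⟨f(x), ẋ⟩ + |f(x)|²/2 ) dt`. -/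
noncomputable def Ulog (T m : ℝ) {d : ℕ}
    (f : EuclideanSpace ℝ (Fin d) → EuclideanSpace ℝ (Fin d))
    (x : ℝ → EuclideanSpace ℝ (Fin d)) : ℝ :=
  m * ⟪f (x T), deriv x T⟫ - m * ⟪f (x 0), deriv x 0⟫ -
    ∫ t in (0:ℝ)..T,
      (m * ⟪fderiv ℝ f (x t) (deriv x t), deriv x t⟫
        - ⟪f (x t), deriv x t⟫ + (1 / 2) * ‖f (x t)‖ ^ 2)

open Filter Topology Asymptotics Set
open scoped NNReal

theorem isLittleO_mul_rpow_add_const_mul_self {C β c₀ : ℝ} (hβ : β < 1) :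
    (fun N : ℝ => C * (N ^ β + c₀) * N) =o[atTop] fun N => N ^ 2 := by
  have hrpow : (fun N : ℝ => N ^ β) =o[atTop] id := by
    refine (isLittleO_iff_tendsto' ?_).2 ?_
    · filter_upwards [eventually_gt_atTop 0] with N hN hN0 using absurd hN0 hN.ne'
    · refine (tendsto_rpow_neg_atTop (sub_pos.2 hβ)).congr' ?_
      filter_upwards [eventually_gt_atTop 0] with N hN
      rw [neg_sub, Real.rpow_sub hN, Real.rpow_one, id]
  have h := ((hrpow.add (isLittleO_const_id_atTop c₀)).const_mul_left C).mul_isBigO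
    (isBigO_refl id atTop)
  simpa only [sq, mul_assoc, id] using h

theorem monotoneOn_mul_rpow_add_const_mul_self {C β c₀ : ℝ} (hC : 0 ≤ C) (hβ : 0 ≤ β)
    (hc₀ : 0 ≤ c₀) : MonotoneOn (fun N : ℝ => C * (N ^ β + c₀) * N) (Ici 0) :=
  fun a (ha : 0 ≤ a) b _ hab => mul_le_mul (by gcongr) hab ha
    (mul_nonneg hC (add_nonneg (Real.rpow_nonneg (ha.trans hab) β) hc₀))

theorem exists_le_mul_sq_add_of_isLittleO {g : ℝ → ℝ} (hg : g =o[atTop] fun N => N ^ 2)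
    (hmono : MonotoneOn g (Ici 0)) {ε : ℝ} (hε : 0 < ε) :
    ∃ M > 0, ∀ N, 0 ≤ N → g N ≤ ε * N ^ 2 + M := by
  obtain ⟨R, hR⟩ := eventually_atTop.1 ((hg.def hε).and (eventually_ge_atTop 0))
  have hR0 : 0 ≤ R := (hR R le_rfl).2
  refine ⟨|g R| + 1, by positivity, fun N hN => ?_⟩
  rcases le_total R N with hRN | hNR
  · have h := (hR N hRN).1
    rw [Real.norm_eq_abs, Real.norm_eq_abs, abs_of_nonneg (sq_nonneg N)] at h
    linarith [le_abs_self (g N), abs_nonneg (g R)]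
  · linarith [hmono hN hR0 hNR, le_abs_self (g R), mul_nonneg hε.le (sq_nonneg N)]

theorem exists_nat_mul_rpow_div_le (c T : ℝ) {α η : ℝ} (hα : 0 < α) (hη : 0 < η) :
    ∃ n : ℕ, 0 < n ∧ c * (T / n) ^ α ≤ η := by
  have h : Tendsto (fun n : ℕ => c * (T / n) ^ α) atTop (𝓝 0) := by
    simpa [Real.zero_rpow hα.ne'] using
      ((tendsto_const_div_atTop_nhds_zero_nat T).rpow_const (Or.inr hα.le)).const_mul c
  obtain ⟨n, hn, hn0⟩ := ((h.eventually (gt_mem_nhds hη)).and (eventually_gt_atTop 0)).exists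
  exact ⟨n, hn0, hn.le⟩

theorem sub_sub_integral_le_of_forall_lt {Φ ψ : ℝ → ℝ} (hψ : Continuous ψ) (a : ℕ → ℝ)
    {c : ℝ} (n : ℕ)
    (h : ∀ i < n, Φ (a (i + 1)) - Φ (a i) - ∫ t in a i..a (i + 1), ψ t ≤ c) :
    Φ (a n) - Φ (a 0) - ∫ t in a 0..a n, ψ t ≤ n * c := by
  induction n with
  | zero => simp
  | succ n ih =>
    rw [← intervalIntegral.integral_add_adjacent_intervals (hψ.intervalIntegrable _ (a n))
      (hψ.intervalIntegrable _ _), Nat.cast_succ]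
    linarith [ih fun i hi => h i (by omega), h n (by omega)]

theorem natCast_mul_div_mem_Icc {T : ℝ} (hT : 0 ≤ T) {i n : ℕ} (hi : i ≤ n) :
    (i : ℝ) * (T / n) ∈ Icc 0 T := by
  rcases Nat.eq_zero_or_pos n with rfl | hn
  · simp [hT]
  refine ⟨by positivity, ?_⟩
  rw [mul_div_assoc', div_le_iff₀ (by exact_mod_cast hn), mul_comm T]
  exact mul_le_mul_of_nonneg_right (Nat.cast_le.2 hi) hT

section

variable {E : Type*} [NormedAddCommGroup E]

noncomputable def holderSeminormIcc (T α : ℝ) (g : ℝ → E) : ℝ :=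
  ⨆ p : Icc (0:ℝ) T × Icc (0:ℝ) T,
    if (p.1 : ℝ) = (p.2 : ℝ) then 0 else ‖g p.1 - g p.2‖ / |(p.1 : ℝ) - (p.2 : ℝ)| ^ α

theorem C1alphaNorm_eq [NormedSpace ℝ E] (T α : ℝ) (x : ℝ → E) :
    C1alphaNorm T α x = (⨆ t : Icc (0:ℝ) T, ‖x t‖) + (⨆ t : Icc (0:ℝ) T, ‖deriv x t‖) +
      holderSeminormIcc T α (deriv x) :=
  rfl

theorem norm_le_iSup_norm_Icc {T t : ℝ} {g : ℝ → E} (hg : ContinuousOn g (Icc 0 T))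
    (ht : t ∈ Icc 0 T) : ‖g t‖ ≤ ⨆ s : Icc (0:ℝ) T, ‖g s‖ := by
  have hbdd := isCompact_Icc.bddAbove_image hg.norm
  rw [image_eq_range] at hbdd
  exact le_ciSup (f := fun s : Icc (0:ℝ) T => ‖g s‖) hbdd ⟨t, ht⟩

theorem holderSeminormIcc_nonneg (T α : ℝ) (g : ℝ → E) : 0 ≤ holderSeminormIcc T α g :=
  Real.iSup_nonneg fun _ => by split_ifs <;> positivity

theorem HolderOnWith.norm_sub_le_holderSeminormIcc_mul {T α : ℝ} (hα : 0 ≤ α) {K : ℝ≥0}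
    {g : ℝ → E} (hg : HolderOnWith K ⟨α, hα⟩ g (Icc 0 T)) {s t : ℝ} (hs : s ∈ Icc 0 T)
    (ht : t ∈ Icc 0 T) : ‖g s - g t‖ ≤ holderSeminormIcc T α g * |s - t| ^ α := by
  rcases eq_or_ne s t with rfl | hst
  · simpa using mul_nonneg (holderSeminormIcc_nonneg T α g) (Real.rpow_nonneg le_rfl α)
  have hpos : 0 < |s - t| ^ α := Real.rpow_pos_of_pos (abs_pos.2 (sub_ne_zero.2 hst)) α
  have hbdd : BddAbove (range fun p : Icc (0:ℝ) T × Icc (0:ℝ) T =>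
      if (p.1 : ℝ) = (p.2 : ℝ) then 0 else ‖g p.1 - g p.2‖ / |(p.1 : ℝ) - (p.2 : ℝ)| ^ α) := by
    refine ⟨K, forall_mem_range.2 fun p => ?_⟩
    split_ifs with hp
    · exact K.coe_nonneg
    · rw [div_le_iff₀ (Real.rpow_pos_of_pos (abs_pos.2 (sub_ne_zero.2 hp)) α),
        ← dist_eq_norm, ← Real.dist_eq]
      exact hg.dist_le p.1.2 p.2.2
  have h := le_ciSup hbdd (⟨⟨s, hs⟩, ⟨t, ht⟩⟩ : Icc (0:ℝ) T × Icc (0:ℝ) T)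
  rw [if_neg hst] at h
  exact (div_le_iff₀ hpos).1 h

variable [InnerProductSpace ℝ E]

theorem inner_sub_inner_sub_integral_eq {g g' y : ℝ → E} {a b : ℝ}
    (hg : ∀ t, HasDerivAt g (g' t) t) (hg' : Continuous g') (hy : Continuous y) :
    ⟪g b, y b⟫ - ⟪g a, y a⟫ - ∫ t in a..b, ⟪g' t, y t⟫ =
      ⟪g a, y b - y a⟫ + ∫ t in a..b, ⟪g' t, y b - y t⟫ := by
  have hftc : ∫ t in a..b, ⟪g' t, y b⟫ = ⟪g b, y b⟫ - ⟪g a, y b⟫ :=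
    intervalIntegral.integral_eq_sub_of_hasDerivAt
      (fun t _ => by simpa using (hg t).inner ℝ (hasDerivAt_const t (y b)))
      ((hg'.inner continuous_const).intervalIntegrable a b)
  simp only [inner_sub_right]
  rw [intervalIntegral.integral_sub ((hg'.inner continuous_const).intervalIntegrable a b)
    ((hg'.inner hy).intervalIntegrable a b), hftc]
  ring

theorem inner_sub_inner_sub_integral_le {g g' y : ℝ → E} {a b G L ω : ℝ} (hab : a ≤ b)
    (hg : ∀ t, HasDerivAt g (g' t) t) (hg' : Continuous g') (hy : Continuous y)
    (hG : ‖g a‖ ≤ G) (hL : ∀ t ∈ Icc a b, ‖g' t‖ ≤ L)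
    (hω : ∀ t ∈ Icc a b, ‖y b - y t‖ ≤ ω) :
    ⟪g b, y b⟫ - ⟪g a, y a⟫ - ∫ t in a..b, ⟪g' t, y t⟫ ≤ (G + L * (b - a)) * ω := by
  have hleft : a ∈ Icc a b := left_mem_Icc.2 hab
  have hω0 : 0 ≤ ω := (norm_nonneg _).trans (hω a hleft)
  have hpoint : ∀ t ∈ Icc a b, ⟪g' t, y b - y t⟫ ≤ L * ω := fun t ht =>
    (real_inner_le_norm _ _).trans
      (mul_le_mul (hL t ht) (hω t ht) (norm_nonneg _) ((norm_nonneg _).trans (hL t ht)))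
  have hint : ∫ t in a..b, ⟪g' t, y b - y t⟫ ≤ L * ((b - a) * ω) := by
    simpa using intervalIntegral.integral_mono_on hab
      ((hg'.inner (continuous_const.sub hy)).intervalIntegrable a b)
      (intervalIntegrable_const (μ := MeasureTheory.volume)) hpoint
  have hbdry : ⟪g a, y b - y a⟫ ≤ G * ω :=
    (real_inner_le_norm _ _).trans
      (mul_le_mul hG (hω a hleft) (norm_nonneg _) ((norm_nonneg _).trans hG))
  rw [inner_sub_inner_sub_integral_eq hg hg' hy]
  linarith

theorem inner_comp_deriv_sub_sub_integral_le {f : E → E} {x : ℝ → E}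
    {T α K G B H : ℝ} (n : ℕ) (hf : ContDiff ℝ 1 f) (hx : ContDiff ℝ 1 x) (hT : 0 ≤ T)
    (hα : 0 ≤ α) (hn : 0 < n) (hH0 : 0 ≤ H) (hK : ∀ v, ‖fderiv ℝ f v‖ ≤ K)
    (hG : ∀ t ∈ Icc 0 T, ‖f (x t)‖ ≤ G) (hB : ∀ t ∈ Icc 0 T, ‖deriv x t‖ ≤ B)
    (hH : ∀ s ∈ Icc 0 T, ∀ t ∈ Icc 0 T, ‖deriv x s - deriv x t‖ ≤ H * |s - t| ^ α) :
    ⟪f (x T), deriv x T⟫ - ⟪f (x 0), deriv x 0⟫ -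
        ∫ t in (0:ℝ)..T, ⟪fderiv ℝ f (x t) (deriv x t), deriv x t⟫ ≤
      (n * G + K * B * T) * (H * (T / n) ^ α) := by
  set δ := T / n with hδ
  have hδ0 : 0 ≤ δ := by positivity
  have hnδ : (n : ℝ) * δ = T := by rw [hδ]; field_simp
  have hK0 : 0 ≤ K := (norm_nonneg _).trans (hK 0)
  have hderiv : ∀ t, HasDerivAt (fun u => f (x u)) (fderiv ℝ f (x t) (deriv x t)) t :=
    fun t => ((hf.differentiable one_ne_zero) (x t)).hasFDerivAt.comp_hasDerivAt t
      ((hx.differentiable one_ne_zero) t).hasDerivAt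
  have hx' : Continuous (deriv x) := hx.continuous_deriv le_rfl
  have hDfx' : Continuous fun t => fderiv ℝ f (x t) (deriv x t) :=
    ((hf.continuous_fderiv one_ne_zero).comp hx.continuous).clm_apply hx'
  have key := sub_sub_integral_le_of_forall_lt (Φ := fun t => ⟪f (x t), deriv x t⟫)
    (hDfx'.inner hx') (fun i : ℕ => i * δ) (c := (G + K * B * δ) * (H * δ ^ α)) n
    fun i hi => by
      have hstep : ((i + 1 : ℕ) : ℝ) * δ - i * δ = δ := by push_cast; ring
      have hsub : Icc ((i : ℝ) * δ) ((i + 1 : ℕ) * δ) ⊆ Icc 0 T :=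
        Icc_subset_Icc (natCast_mul_div_mem_Icc hT (by omega)).1
          (natCast_mul_div_mem_Icc hT (by omega : i + 1 ≤ n)).2
      have h := inner_sub_inner_sub_integral_le (by linarith) hderiv hDfx' hx'
        (hG _ (natCast_mul_div_mem_Icc hT hi.le))
        (L := K * B) (ω := H * δ ^ α)
        (fun t ht => (ContinuousLinearMap.le_opNorm _ _).trans
          (mul_le_mul (hK _) (hB t (hsub ht)) (norm_nonneg _) hK0))
        (fun t ht => (hH _ (hsub (right_mem_Icc.2 (by linarith [ht.1, ht.2]))) t (hsub ht)).trans
          (mul_le_mul_of_nonneg_left (Real.rpow_le_rpow (abs_nonneg _)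
            (by rw [abs_le]; constructor <;> linarith [ht.1, ht.2]) hα) hH0))
      rwa [hstep] at h
  simp only [Nat.cast_zero, zero_mul] at key
  rw [hnδ] at key
  calc _ ≤ (n : ℝ) * ((G + K * B * δ) * (H * δ ^ α)) := key
    _ = (n * G + K * B * (n * δ)) * (H * δ ^ α) := by ring
    _ = _ := by rw [hnδ]

theorem integral_inner_sub_half_sq_le {u v : ℝ → E} {T G B : ℝ} (hT : 0 ≤ T)
    (hu : Continuous u) (hv : Continuous v) (hG : ∀ t ∈ Icc 0 T, ‖u t‖ ≤ G)
    (hB : ∀ t ∈ Icc 0 T, ‖v t‖ ≤ B) :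
    ∫ t in (0:ℝ)..T, (⟪u t, v t⟫ - 1 / 2 * ‖u t‖ ^ 2) ≤ T * (G * B) := by
  have hpoint : ∀ t ∈ Icc 0 T, ⟪u t, v t⟫ - 1 / 2 * ‖u t‖ ^ 2 ≤ G * B := fun t ht => by
    have h := (real_inner_le_norm (u t) (v t)).trans
      (mul_le_mul (hG t ht) (hB t ht) (norm_nonneg _) ((norm_nonneg _).trans (hG t ht)))
    nlinarith [sq_nonneg ‖u t‖]
  have h := intervalIntegral.integral_mono_on hT
    (((hu.inner hv).sub (continuous_const.mul (hu.norm.pow 2))).intervalIntegrable 0 T)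
    (intervalIntegrable_const (μ := MeasureTheory.volume)) hpoint
  rwa [intervalIntegral.integral_const, smul_eq_mul, sub_zero] at h

end

theorem Ulog_eq {d : ℕ} (T m : ℝ) {f : EuclideanSpace ℝ (Fin d) → EuclideanSpace ℝ (Fin d)}
    {x : ℝ → EuclideanSpace ℝ (Fin d)} (hf : ContDiff ℝ 1 f) (hx : ContDiff ℝ 1 x) :
    Ulog T m f x =
      m * (⟪f (x T), deriv x T⟫ - ⟪f (x 0), deriv x 0⟫ -
        ∫ t in (0:ℝ)..T, ⟪fderiv ℝ f (x t) (deriv x t), deriv x t⟫) +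
      ∫ t in (0:ℝ)..T, (⟪f (x t), deriv x t⟫ - 1 / 2 * ‖f (x t)‖ ^ 2) := by
  have hx' : Continuous (deriv x) := hx.continuous_deriv le_rfl
  have hfx : Continuous fun t => f (x t) := hf.continuous.comp hx.continuous
  have hDfx' : Continuous fun t => ⟪fderiv ℝ f (x t) (deriv x t), deriv x t⟫ :=
    (((hf.continuous_fderiv one_ne_zero).comp hx.continuous).clm_apply hx').inner hx'
  have htail : Continuous fun t => ⟪f (x t), deriv x t⟫ - 1 / 2 * ‖f (x t)‖ ^ 2 :=
    (hfx.inner hx').sub (continuous_const.mul (hfx.norm.pow 2))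
  have hsplit : ∫ t in (0:ℝ)..T, (m * ⟪fderiv ℝ f (x t) (deriv x t), deriv x t⟫
      - ⟪f (x t), deriv x t⟫ + 1 / 2 * ‖f (x t)‖ ^ 2) =
      m * (∫ t in (0:ℝ)..T, ⟪fderiv ℝ f (x t) (deriv x t), deriv x t⟫) -
        ∫ t in (0:ℝ)..T, (⟪f (x t), deriv x t⟫ - 1 / 2 * ‖f (x t)‖ ^ 2) := by
    rw [← intervalIntegral.integral_const_mul, ← intervalIntegral.integral_sub
      ((hDfx'.const_mul m).intervalIntegrable 0 T) (htail.intervalIntegrable 0 T)]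
    exact intervalIntegral.integral_congr fun t _ => by ring
  rw [Ulog, hsplit]
  ring

theorem Ulog_le {d : ℕ} {T m α K G B H : ℝ} (n : ℕ)
    {f : EuclideanSpace ℝ (Fin d) → EuclideanSpace ℝ (Fin d)}
    {x : ℝ → EuclideanSpace ℝ (Fin d)} (hf : ContDiff ℝ 1 f) (hx : ContDiff ℝ 1 x)
    (hT : 0 ≤ T) (hm : 0 ≤ m) (hα : 0 ≤ α) (hn : 0 < n) (hH0 : 0 ≤ H)
    (hK : ∀ v, ‖fderiv ℝ f v‖ ≤ K)
    (hG : ∀ t ∈ Icc 0 T, ‖f (x t)‖ ≤ G) (hB : ∀ t ∈ Icc 0 T, ‖deriv x t‖ ≤ B)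
    (hH : ∀ s ∈ Icc 0 T, ∀ t ∈ Icc 0 T, ‖deriv x s - deriv x t‖ ≤ H * |s - t| ^ α) :
    Ulog T m f x ≤ m * ((n * G + K * B * T) * (H * (T / n) ^ α)) + T * (G * B) := by
  rw [Ulog_eq T m hf hx]
  gcongr
  · exact inner_comp_deriv_sub_sub_integral_le n hf hx hT hα hn hH0 hK hG hB hH
  · exact integral_inner_sub_half_sq_le hT (hf.continuous.comp hx.continuous)
      (hx.continuous_deriv le_rfl) hG hB

theorem C1alphaNorm_nonneg {E : Type*} [NormedAddCommGroup E] [NormedSpace ℝ E] (T α : ℝ)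
    (x : ℝ → E) : 0 ≤ C1alphaNorm T α x :=
  add_nonneg (add_nonneg (Real.iSup_nonneg fun _ => norm_nonneg _)
    (Real.iSup_nonneg fun _ => norm_nonneg _)) (holderSeminormIcc_nonneg T α _)

theorem Ulog_le_C1alphaNorm {d : ℕ} {T m α β c₀ K : ℝ} (n : ℕ) (hT : 0 ≤ T) (hm : 0 ≤ m)
    (hα : 0 ≤ α) (hn : 0 < n) (hβ : 0 ≤ β) (hc₀ : 0 ≤ c₀)
    {f : EuclideanSpace ℝ (Fin d) → EuclideanSpace ℝ (Fin d)} (hf : ContDiff ℝ 1 f)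
    (hK : ∀ v, ‖fderiv ℝ f v‖ ≤ K) (hgrowth : ∀ v, ‖f v‖ ≤ ‖v‖ ^ β + c₀)
    {x : ℝ → EuclideanSpace ℝ (Fin d)} (hx : ContDiff ℝ 1 x) {K' : ℝ≥0}
    (hhol : HolderOnWith K' ⟨α, hα⟩ (deriv x) (Icc 0 T)) :
    Ulog T m f x ≤ (m * n * (T / n) ^ α + T) * (C1alphaNorm T α x ^ β + c₀) *
      C1alphaNorm T α x + m * K * T * (T / n) ^ α * C1alphaNorm T α x ^ 2 := by
  have hx' : Continuous (deriv x) := hx.continuous_deriv le_rfl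
  set A := ⨆ t : Icc (0:ℝ) T, ‖x t‖
  set B := ⨆ t : Icc (0:ℝ) T, ‖deriv x t‖
  set H := holderSeminormIcc T α (deriv x)
  have hA : ∀ t ∈ Icc 0 T, ‖x t‖ ≤ A := fun t => norm_le_iSup_norm_Icc hx.continuous.continuousOn
  have hB : ∀ t ∈ Icc 0 T, ‖deriv x t‖ ≤ B := fun t => norm_le_iSup_norm_Icc hx'.continuousOn
  have hG : ∀ t ∈ Icc 0 T, ‖f (x t)‖ ≤ A ^ β + c₀ := fun t ht =>
    (hgrowth _).trans (by gcongr; exact hA t ht)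
  have hH0 : 0 ≤ H := holderSeminormIcc_nonneg T α _
  have hU := Ulog_le n hf hx hT hm hα hn hH0 hK hG hB
    fun s hs t ht => hhol.norm_sub_le_holderSeminormIcc_mul hα hs ht
  have hA0 : 0 ≤ A := (norm_nonneg _).trans (hA 0 (left_mem_Icc.2 hT))
  have hB0 : 0 ≤ B := (norm_nonneg _).trans (hB 0 (left_mem_Icc.2 hT))
  have hK0 : 0 ≤ K := (norm_nonneg _).trans (hK 0)
  rw [C1alphaNorm_eq]
  set N := A + B + H
  have hGN : A ^ β + c₀ ≤ N ^ β + c₀ := by gcongr; linarith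
  calc Ulog T m f x ≤ m * ((n * (A ^ β + c₀) + K * B * T) * (H * (T / n) ^ α)) +
        T * ((A ^ β + c₀) * B) := hU
    _ = m * n * (T / n) ^ α * ((A ^ β + c₀) * H) + m * K * T * (T / n) ^ α * (B * H) +
        T * ((A ^ β + c₀) * B) := by ring
    _ ≤ m * n * (T / n) ^ α * ((N ^ β + c₀) * N) + m * K * T * (T / n) ^ α * (N * N) +
        T * ((N ^ β + c₀) * N) := by gcongr <;> linarith
    _ = _ := by ring

theorem stmt10_general (T m : ℝ) (hT : 0 < T) (hm : 0 < m) (d : ℕ)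
    (α : ℝ) (hα0 : 0 < α)
    (f : EuclideanSpace ℝ (Fin d) → EuclideanSpace ℝ (Fin d))
    (hf : ContDiff ℝ 2 f)
    (hbdd : ∃ K : ℝ, (∀ v, ‖fderiv ℝ f v‖ ≤ K) ∧ (∀ v, ‖fderiv ℝ (fderiv ℝ f) v‖ ≤ K))
    (β c₀ : ℝ) (hβ0 : 0 ≤ β) (hβ : β < 1) (hc₀ : 0 < c₀)
    (hgrowth : ∀ v, ‖f v‖ ≤ ‖v‖ ^ β + c₀) :
    ∀ ε > 0, ∃ M > 0, ∀ x : ℝ → EuclideanSpace ℝ (Fin d), ContDiff ℝ 1 x →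
      (∃ K : NNReal, HolderOnWith K ⟨α, hα0.le⟩ (deriv x) (Set.Icc 0 T)) →
      Ulog T m f x ≤ ε * (C1alphaNorm T α x) ^ 2 + M := by
  intro ε hε
  obtain ⟨K, hK, -⟩ := hbdd
  obtain ⟨n, hn, hmesh⟩ := exists_nat_mul_rpow_div_le (m * K * T) T hα0 (half_pos hε)
  obtain ⟨M, hM, hyoung⟩ := exists_le_mul_sq_add_of_isLittleO
    (isLittleO_mul_rpow_add_const_mul_self (C := m * n * (T / n) ^ α + T) (c₀ := c₀) hβ)
    (monotoneOn_mul_rpow_add_const_mul_self (by positivity) hβ0 hc₀.le) (half_pos hε)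
  refine ⟨M, hM, fun x hx ⟨K', hhol⟩ => ?_⟩
  have hN := C1alphaNorm_nonneg T α x
  calc Ulog T m f x ≤ (m * n * (T / n) ^ α + T) * (C1alphaNorm T α x ^ β + c₀) *
        C1alphaNorm T α x + m * K * T * (T / n) ^ α * C1alphaNorm T α x ^ 2 :=
      Ulog_le_C1alphaNorm n hT.le hm.le hα0.le hn hβ0 hc₀.le (hf.of_le one_le_two) hK hgrowth hx
        hhol
    _ ≤ (ε / 2 * C1alphaNorm T α x ^ 2 + M) + ε / 2 * C1alphaNorm T α x ^ 2 := by
      gcongr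
      exact hyoung _ hN
    _ = ε * C1alphaNorm T α x ^ 2 + M := by ring

/-- Under the paper's assumptions on the drift `f`, for every `ε > 0` the
log-density `U` satisfies `U(x) ≤ ε ‖x‖²_{C^{1+α}} + M` uniformly over all
`C^{1+α}` paths `x`. -/
theorem stmt10 (T m : ℝ) (hT : 0 < T) (hm : 0 < m) (d : ℕ) (hd : 1 ≤ d)
    (α : ℝ) (hα0 : 0 < α) (hα1 : α < 1)
    (f : EuclideanSpace ℝ (Fin d) → EuclideanSpace ℝ (Fin d))
    (hf : ContDiff ℝ 2 f)
    (hbdd : ∃ K : ℝ, (∀ v, ‖fderiv ℝ f v‖ ≤ K) ∧ (∀ v, ‖fderiv ℝ (fderiv ℝ f) v‖ ≤ K))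
    (hlip : ∃ K : NNReal, LipschitzWith K (fderiv ℝ f)
      ∧ LipschitzWith K (fderiv ℝ (fderiv ℝ f)))
    (β c₀ : ℝ) (hβ0 : 0 ≤ β) (hβ : β < 1) (hc₀ : 0 < c₀)
    (hgrowth : ∀ v, ‖f v‖ ≤ ‖v‖ ^ β + c₀) :
    ∀ ε > 0, ∃ M > 0, ∀ x : ℝ → EuclideanSpace ℝ (Fin d), ContDiff ℝ 1 x →
      (∃ K : NNReal, HolderOnWith K ⟨α, hα0.le⟩ (deriv x) (Set.Icc 0 T)) →
      Ulog T m f x ≤ ε * (C1alphaNorm T α x) ^ 2 + M :=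
  stmt10_general T m hT hm d α hα0 f hf hbdd β c₀ hβ0 hβ hc₀ hgrowth
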